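/- The identity (−1)^{e+1}·∏_{i=1}^e H_i = q·exp(Σ_{m≥1} (1/m)·[z^{me}]{Q(z)^m}·q^m) holds in K[[u]] under the identification q = u^e; both sides are formal power series in q = u^e, the series (−1)^{e+1}·(∏_{i=1}^e H_i)/q has constant term 1 (the sign (−1)^{e+1} is exactly the constant coefficient of (∏_{i=1}^e H_i)/q, arising from the product of the e-th roots of unity over all branches), and equivalently log((−1)^{e+1}·∏_{i=1}^e H_i / q) = Σ_{m≥1} (1/m)·[z^{me}]{Q(z)^m}·q^m, where log denotes the formal logarithm of a power series with constant term 1. -/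

import Mathlib

open PowerSeries

/-- Composition `Q ∘ h` of formal power series, intended for `h` with zero constant
term (then `coeff n (h^k) = 0` for `k > n`, so the finite truncation below is the
honest composition / substitution of `h` into `Q`). -/
noncomputable def pcomp {K : Type*} [Field K] (Q h : PowerSeries K) : PowerSeries K :=
  PowerSeries.mk fun n => ∑ k ∈ Finset.range (n + 1),
    PowerSeries.coeff k Q * PowerSeries.coeff n (h ^ k)

/-- The exponential series `Σ_{n≥0} z^n/n!`. -/
noncomputable def expSeries (K : Type*) [Field K] [CharZero K] : PowerSeries K :=
  PowerSeries.mk fun n => ((n.factorial : K))⁻¹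

/-- The logarithm series `Σ_{m≥1} (−1)^{m+1} z^m/m` (its coefficient at `m = 0`
vanishes since `(0 : K)⁻¹ = 0`). -/
noncomputable def logSeries (K : Type*) [Field K] [CharZero K] : PowerSeries K :=
  PowerSeries.mk fun n => (-1) ^ (n + 1) * (n : K)⁻¹

/-- The formal exponential `exp f` of a power series `f` with zero constant term. -/
noncomputable def expS {K : Type*} [Field K] [CharZero K] (f : PowerSeries K) : PowerSeries K :=
  pcomp (expSeries K) f

/-- The formal logarithm `log f = Σ_{m≥1} (−1)^{m+1}(f−1)^m/m` of a power series `f`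
with constant term `1`. -/
noncomputable def logS {K : Type*} [Field K] [CharZero K] (f : PowerSeries K) : PowerSeries K :=
  pcomp (logSeries K) (f - 1)

open Finset

/-!
Write `h = X v` with `v(0)^e = 1`. With the Euler operator `θ = X d/dX` and `a = θ v / v`, the
product `V = ∏ᵢ v(ωⁱ X)` satisfies `θ V = V · ∑ᵢ a(ωⁱ X)`, and summing over the `e`-th roots
of unity keeps exactly the coefficients of `a` at multiples of `e`. Lagrange inversion (the
residue of an exact differential vanishes) gives `[X^{me}] a = [z^{me}] Q^m`, so `θ V = V · θ L`
for the series `L = ∑ (1/m) [z^{me}] Q^m X^{me}`. Since `V(0) = 1`, this forces `V = exp L` and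
`log V = L`. Finally `∏ᵢ H_i = X^e (∏ᵢ ωⁱ) V` and `∏_{i=1}^e ωⁱ = (-1)^{e+1}`.
-/

theorem Derivation.map_prod_of_eq_mul {R A ι : Type*} [CommSemiring R] [CommRing A] [Algebra R A]
    (D : Derivation R A A) (s : Finset ι) {f a : ι → A} (h : ∀ i ∈ s, D (f i) = f i * a i) :
    D (∏ i ∈ s, f i) = (∏ i ∈ s, f i) * ∑ i ∈ s, a i := by
  classical
  induction s using Finset.induction_on with
  | empty => simp
  | insert j s hj ih =>
    rw [Finset.prod_insert hj, Finset.sum_insert hj, Derivation.leibniz, smul_eq_mul, smul_eq_mul,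
      ih fun i hi => h i (Finset.mem_insert_of_mem hi), h j (Finset.mem_insert_self j s)]
    ring

namespace IsPrimitiveRoot

variable {K : Type*} [Field K] {e : ℕ} {ω : K}

theorem sum_Icc_pow_pow (hω : IsPrimitiveRoot ω e) (n : ℕ) :
    ∑ i ∈ Icc 1 e, (ω ^ i) ^ n = if e ∣ n then (e : K) else 0 := by
  simp_rw [← pow_mul, mul_comm _ n, pow_mul]
  split_ifs with hn
  · simp [(hω.pow_eq_one_iff_dvd n).mpr hn]
  · have hne : ω ^ n ≠ 1 := fun h => hn ((hω.pow_eq_one_iff_dvd n).mp h)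
    have hpow : (ω ^ n) ^ e = 1 := by rw [← pow_mul, mul_comm, pow_mul, hω.pow_eq_one, one_pow]
    rw [← Ico_add_one_right_eq_Icc, sum_Ico_eq_sum_range]
    simp_rw [pow_add, pow_one, ← mul_sum, Nat.add_sub_cancel, geom_sum_eq hne, hpow, sub_self,
      zero_div, mul_zero]

theorem prod_Icc_pow (hω : IsPrimitiveRoot ω e) (he : e ≠ 0) :
    ∏ i ∈ Icc 1 e, ω ^ i = (-1) ^ (e + 1) := by
  have hsum : ∀ n, (∑ i ∈ Icc 1 n, i) * 2 = n * (n + 1) := by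
    intro n
    induction n with
    | zero => simp
    | succ n ih => rw [sum_Icc_succ_top (by omega), add_mul, ih]; ring
  rw [prod_pow_eq_pow_sum]
  rcases Nat.even_or_odd' e with ⟨t, rfl | rfl⟩
  · have ht : t ≠ 0 := by omega
    have hneg : ω ^ t = -1 :=
      (by simpa [ht] using hω.pow_of_dvd ht (dvd_mul_left t 2) : IsPrimitiveRoot (ω ^ t) 2)
        |>.eq_neg_one_of_two_right
    have : ∑ i ∈ Icc 1 (2 * t), i = t * (2 * t + 1) := by linarith [hsum (2 * t)]
    rw [this, pow_mul, hneg]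
  · have : ∑ i ∈ Icc 1 (2 * t + 1), i = (2 * t + 1) * (t + 1) := by linarith [hsum (2 * t + 1)]
    rw [this, pow_mul, hω.pow_eq_one, one_pow, show 2 * t + 1 + 1 = 2 * (t + 1) by ring, pow_mul]
    simp

end IsPrimitiveRoot

namespace PowerSeries

variable {K : Type*} [Field K]

theorem coeff_pow_eq_zero_of_lt {f : K⟦X⟧} (hf : constantCoeff f = 0) {n k : ℕ} (h : n < k) :
    coeff n (f ^ k) = 0 :=
  X_pow_dvd_iff.mp (pow_dvd_pow_of_dvd (X_dvd_iff.mpr hf) k) n h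

theorem constantCoeff_pcomp (Q h : K⟦X⟧) : constantCoeff (pcomp Q h) = coeff 0 Q := by
  rw [← coeff_zero_eq_constantCoeff_apply, pcomp, coeff_mk]
  simp

theorem pcomp_eq_subst {h : K⟦X⟧} (hh : constantCoeff h = 0) (Q : K⟦X⟧) :
    pcomp Q h = Q.subst h := by
  ext n
  rw [coeff_subst' (HasSubst.of_constantCoeff_zero' hh), pcomp, coeff_mk,
    finsum_eq_sum_of_support_subset (s := range (n + 1))]
  · rfl
  · intro k hk
    simp only [Function.mem_support, smul_eq_mul] at hk
    by_contra hkn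
    exact hk (by rw [coeff_pow_eq_zero_of_lt hh (by simpa using hkn), mul_zero])

theorem coeff_subst_mul {f : K⟦X⟧} (hf : constantCoeff f = 0) (P F : K⟦X⟧) (n : ℕ) :
    coeff n (P.subst f * F) = ∑ k ∈ range (n + 1), coeff k P * coeff n (f ^ k * F) := by
  have htrunc : ∀ i ≤ n,
      coeff i (P.subst f) = ∑ k ∈ range (n + 1), coeff k P * coeff i (f ^ k) := by
    intro i hi
    rw [← pcomp_eq_subst hf, pcomp, coeff_mk]
    refine sum_subset (range_subset_range.mpr (by omega)) fun k _ hk => ?_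
    rw [coeff_pow_eq_zero_of_lt hf (by simpa using hk), mul_zero]
  simp only [coeff_mul, mul_sum]
  rw [sum_comm]
  refine sum_congr rfl fun p hp => ?_
  rw [htrunc p.1 (HasAntidiagonal.antidiagonal.fst_le hp), sum_mul]
  simp only [mul_assoc]

theorem prod_rescale_X_mul {ι : Type*} (s : Finset ι) (c : ι → K) (v : K⟦X⟧) :
    ∏ i ∈ s, rescale (c i) (X * v) =
      X ^ s.card * (C (∏ i ∈ s, c i) * ∏ i ∈ s, rescale (c i) v) := by
  simp_rw [map_mul, rescale_X, prod_mul_distrib, prod_const, map_prod]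
  ring

theorem constantCoeff_rescale (c : K) (f : K⟦X⟧) :
    constantCoeff (rescale c f) = constantCoeff f := by
  rw [← coeff_zero_eq_constantCoeff_apply, coeff_rescale, pow_zero, one_mul,
    coeff_zero_eq_constantCoeff_apply]

variable (K) in
noncomputable def eulerOp : Derivation K K⟦X⟧ K⟦X⟧ := (X : K⟦X⟧) • d⁄dX K

theorem eulerOp_apply (f : K⟦X⟧) : eulerOp K f = X * d⁄dX K f := rfl

theorem coeff_eulerOp (f : K⟦X⟧) (n : ℕ) : coeff n (eulerOp K f) = n * coeff n f := by
  rcases n with _ | n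
  · simp [eulerOp_apply]
  · rw [eulerOp_apply, coeff_succ_X_mul, coeff_derivative]; push_cast; ring

theorem eulerOp_rescale (c : K) (f : K⟦X⟧) : eulerOp K (rescale c f) = rescale c (eulerOp K f) := by
  ext n
  simp only [coeff_eulerOp, coeff_rescale]
  ring

section

variable [CharZero K]

theorem coeff_inv_pow_succ_mul_derivative_X_mul {v : K⟦X⟧}
    (hv : constantCoeff v ≠ 0) (j : ℕ) :
    coeff j (v⁻¹ ^ (j + 1) * d⁄dX K (X * v)) = if j = 0 then 1 else 0 := by
  have hvw : v * v⁻¹ = 1 := PowerSeries.mul_inv_cancel v hv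
  have hd : d⁄dX K (X * v) = v + X * d⁄dX K v := by
    rw [Derivation.leibniz, derivative_X, smul_eq_mul, smul_eq_mul, mul_one, add_comm]
  rcases j with _ | i
  · rw [coeff_zero_eq_constantCoeff_apply, pow_one, hd, map_mul, map_add, map_mul,
      constantCoeff_X, zero_mul, add_zero, mul_comm, ← map_mul, hvw, map_one, if_pos rfl]
  -- `f' / f^(i+2)` with `f = X v` is exact, so its residue vanishes: the two coefficients of
  -- `hsplit` cancel since `d(v⁻¹^(i+1)) = -(i+1) v⁻¹^(i+2) v'`.
  have hsplit :
      v⁻¹ ^ (i + 2) * d⁄dX K (X * v) = v⁻¹ ^ (i + 1) + X * (v⁻¹ ^ (i + 2) * d⁄dX K v) := by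
    rw [hd, mul_add, pow_succ, mul_assoc, mul_comm v⁻¹ v, hvw, mul_one]; ring
  have hderiv : d⁄dX K (v⁻¹ ^ (i + 1)) = -((i + 1 : K) • (v⁻¹ ^ (i + 2) * d⁄dX K v)) := by
    rw [Derivation.leibniz_pow, derivative_inv']
    simp only [nsmul_eq_mul, smul_eq_mul, Nat.cast_add, Nat.cast_one, add_tsub_cancel_right,
      Algebra.smul_def, map_add, map_natCast, map_one]
    ring
  have hcoeff := congrArg (coeff i) hderiv
  rw [coeff_derivative, map_neg, coeff_smul, smul_eq_mul] at hcoeff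
  have hi : (i + 1 : K) ≠ 0 := by exact_mod_cast i.succ_ne_zero
  rw [hsplit, map_add, coeff_succ_X_mul, if_neg i.succ_ne_zero]
  exact mul_right_cancel₀ hi (by linear_combination hcoeff)

-- Lagrange inversion: for `f = X v`, the residue of `P(f) f' / f^(n+1)` is `[z^n] P`.
theorem coeff_subst_X_mul_mul_inv_pow_mul_derivative {v : K⟦X⟧}
    (hv : constantCoeff v ≠ 0) (P : K⟦X⟧) (n : ℕ) :
    coeff n (P.subst (X * v) * (v⁻¹ ^ (n + 1) * d⁄dX K (X * v))) = coeff n P := by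
  have hterm : ∀ k ≤ n, coeff n ((X * v) ^ k * (v⁻¹ ^ (n + 1) * d⁄dX K (X * v)))
      = if k = n then 1 else 0 := by
    intro k hk
    obtain ⟨j, rfl⟩ := Nat.exists_eq_add_of_le hk
    have hvk : v ^ k * v⁻¹ ^ k = 1 := by rw [← mul_pow, PowerSeries.mul_inv_cancel v hv, one_pow]
    have hshift : (X * v) ^ k * (v⁻¹ ^ (k + j + 1) * d⁄dX K (X * v))
        = X ^ k * (v⁻¹ ^ (j + 1) * d⁄dX K (X * v)) := by
      rw [mul_pow, add_assoc, pow_add]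
      linear_combination (X ^ k * (v⁻¹ ^ (j + 1) * d⁄dX K (X * v))) * hvk
    rw [hshift, add_comm k j, coeff_X_pow_mul, coeff_inv_pow_succ_mul_derivative_X_mul hv]
    simp
  rw [coeff_subst_mul (by simp) P _ n, sum_eq_single n]
  · rw [hterm n le_rfl, if_pos rfl, mul_one]
  · intro k hk hkn
    rw [hterm k (by simpa [Nat.lt_succ_iff] using hk), if_neg hkn, mul_zero]
  · simp

theorem expSeries_eq_exp : expSeries K = exp K := by
  ext n
  simp [expSeries]

theorem logSeries_eq_log : logSeries K = log K := by
  ext n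
  rcases n with _ | n
  · simp [logSeries]
  · simp [logSeries, div_eq_mul_inv]

theorem expS_eq_exp_subst {f : K⟦X⟧} (hf : constantCoeff f = 0) : expS f = (exp K).subst f := by
  rw [expS, pcomp_eq_subst hf, expSeries_eq_exp]

theorem logS_eq_logOf {f : K⟦X⟧} (hf : constantCoeff f = 1) : logS f = logOf f := by
  rw [logS, pcomp_eq_subst (by rw [map_sub, hf, map_one, sub_self]), logSeries_eq_log, logOf_eq]

theorem eq_of_derivative_eq_mul {f g B : K⟦X⟧} (hf : d⁄dX K f = f * B) (hg : d⁄dX K g = g * B)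
    (hg0 : constantCoeff g ≠ 0) (h0 : constantCoeff f = constantCoeff g) : f = g := by
  have hgg : g * g⁻¹ = 1 := PowerSeries.mul_inv_cancel g hg0
  have hquot : f * g⁻¹ = 1 := by
    refine derivative.ext ?_ ?_
    · rw [Derivation.leibniz, derivative_inv', hf, hg, smul_eq_mul, smul_eq_mul, derivative_one]
      linear_combination (-(f * B * g⁻¹)) * hgg
    · rw [map_mul, constantCoeff_inv, h0, mul_inv_cancel₀ hg0, map_one]
  calc f = f * g⁻¹ * g := by rw [mul_assoc, mul_comm g⁻¹, hgg, mul_one]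
    _ = g := by rw [hquot, one_mul]

theorem eq_exp_subst_of_derivative_eq_mul {g L : K⟦X⟧} (hL : constantCoeff L = 0)
    (hg : constantCoeff g = 1) (hd : d⁄dX K g = g * d⁄dX K L) : g = (exp K).subst L := by
  have hE0 : constantCoeff ((exp K).subst L) = 1 := by
    rw [← pcomp_eq_subst hL, constantCoeff_pcomp, coeff_zero_eq_constantCoeff_apply,
      constantCoeff_exp]
  refine eq_of_derivative_eq_mul hd ?_ (by rw [hE0]; exact one_ne_zero) (by rw [hg, hE0])
  rw [derivative_subst (HasSubst.of_constantCoeff_zero' hL), derivative_exp]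

theorem logOf_eq_of_derivative_eq_mul {g L : K⟦X⟧} (hL : constantCoeff L = 0)
    (hg : constantCoeff g = 1) (hd : d⁄dX K g = g * d⁄dX K L) : logOf g = L := by
  have hg1 : constantCoeff (g - 1) = 0 := by rw [map_sub, hg, map_one, sub_self]
  have hgeom : (1 + X) * mk (fun n ↦ algebraMap ℚ K ((-1 : ℚ) ^ n)) = 1 := by
    have := congrArg (rescale (-1 : K)) (mk_one_mul_one_sub_eq_one (S := K))
    rw [map_mul, rescale_mk, map_sub, map_one, rescale_X] at this
    simpa [mul_comm] using this
  have hinv : g * (d⁄dX K (log K)).subst (g - 1) = 1 := by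
    have hs := HasSubst.of_constantCoeff_zero' hg1
    have := congrArg (substAlgHom hs) hgeom
    rwa [map_mul, map_add, map_one, coe_substAlgHom, subst_X hs, ← deriv_log,
      add_sub_cancel] at this
  refine derivative.ext ?_ (by rw [constantCoeff_logOf hg, hL])
  rw [logOf_eq, derivative_subst (HasSubst.of_constantCoeff_zero' hg1), map_sub,
    Derivation.map_one_eq_zero, sub_zero, hd, ← mul_assoc, mul_comm _ g, hinv, one_mul]

variable {e : ℕ} {ω : K} {Q v : K⟦X⟧}

theorem coeff_inv_mul_eulerOp_eq_coeff_pow (hv0 : constantCoeff v ≠ 0)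
    (hv : v ^ e = Q.subst (X * v)) (he : e ≠ 0) {m : ℕ} (hm : m ≠ 0) :
    coeff (m * e) (v⁻¹ * eulerOp K v) = coeff (m * e) (Q ^ m) := by
  have hres := coeff_subst_X_mul_mul_inv_pow_mul_derivative hv0 (Q ^ m) (m * e)
  have hvv : v ^ (m * e) * v⁻¹ ^ (m * e) = 1 := by
    rw [← mul_pow, PowerSeries.mul_inv_cancel v hv0, one_pow]
  have hser : (Q ^ m).subst (X * v) * (v⁻¹ ^ (m * e + 1) * d⁄dX K (X * v))
      = 1 + v⁻¹ * eulerOp K v := by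
    rw [subst_pow (HasSubst.of_constantCoeff_zero' (by simp)), ← hv, ← pow_mul, mul_comm e m,
      Derivation.leibniz, derivative_X, smul_eq_mul, smul_eq_mul, mul_one, eulerOp_apply, pow_succ]
    linear_combination (v⁻¹ * (v + X * d⁄dX K v)) * hvv + PowerSeries.mul_inv_cancel v hv0
  rwa [hser, map_add, coeff_one, if_neg (mul_ne_zero hm he), zero_add] at hres

theorem eulerOp_subst_X_pow (hω : IsPrimitiveRoot ω e) (he : e ≠ 0) (hv0 : constantCoeff v ≠ 0)
    (hv : v ^ e = Q.subst (X * v)) :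
    eulerOp K ((mk fun m ↦ (m : K)⁻¹ * coeff (m * e) (Q ^ m)).subst (X ^ e))
      = ∑ i ∈ Icc 1 e, rescale (ω ^ i) (v⁻¹ * eulerOp K v) := by
  ext n
  simp only [coeff_eulerOp, coeff_subst_X_pow he, map_sum, coeff_rescale, ← sum_mul,
    hω.sum_Icc_pow_pow, coeff_mk, Algebra.algebraMap_self, RingHom.id_apply]
  split_ifs with hn
  · obtain ⟨m, rfl⟩ := hn
    rcases eq_or_ne m 0 with rfl | hm
    · simp [eulerOp_apply]
    · rw [Nat.mul_div_cancel_left m (Nat.pos_of_ne_zero he), mul_comm e m,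
        coeff_inv_mul_eulerOp_eq_coeff_pow hv0 hv he hm]
      field_simp
      push_cast
      ring
  · simp

theorem derivative_prod_rescale (hω : IsPrimitiveRoot ω e) (he : e ≠ 0)
    (hv0 : constantCoeff v ≠ 0) (hv : v ^ e = Q.subst (X * v)) :
    d⁄dX K (∏ i ∈ Icc 1 e, rescale (ω ^ i) v) = (∏ i ∈ Icc 1 e, rescale (ω ^ i) v) *
      d⁄dX K ((mk fun m ↦ (m : K)⁻¹ * coeff (m * e) (Q ^ m)).subst (X ^ e)) := by
  have hθ : eulerOp K (∏ i ∈ Icc 1 e, rescale (ω ^ i) v) = (∏ i ∈ Icc 1 e, rescale (ω ^ i) v) *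
      eulerOp K ((mk fun m ↦ (m : K)⁻¹ * coeff (m * e) (Q ^ m)).subst (X ^ e)) := by
    rw [eulerOp_subst_X_pow hω he hv0 hv]
    refine (eulerOp K).map_prod_of_eq_mul _ fun i _ ↦ ?_
    rw [eulerOp_rescale, ← map_mul, ← mul_assoc, PowerSeries.mul_inv_cancel v hv0, one_mul]
  apply mul_left_cancel₀ (X_ne_zero (R := K))
  simpa only [eulerOp_apply, mul_left_comm] using hθ

end

end PowerSeries

/-- Let `K` be a field of characteristic zero containing a primitive
`e`-th root of unity `ω` (`e ≥ 1`), let `Q ∈ K[[z]]` have constant term `1`, and let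
`h ∈ K[[u]]` have zero constant term and satisfy `h(u)^e = u^e·Q(h(u))`; set
`H_i := h(ω^i·u)` for `i = 1,…,e`.  Then, in `K[[u]]` under the identification
`q = u^e`, writing `∏_{i=1}^e H_i = q·G` (so that `G = (∏ H_i)/q`):
the constant coefficient of `G` is exactly the sign `(−1)^{e+1}` (so
`(−1)^{e+1}·(∏ H_i)/q` has constant term `1`),
`log ((−1)^{e+1}·∏ H_i/q) = Σ_{m≥1} (1/m)·[z^{me}]{Q(z)^m}·q^m`, and equivalently
`(−1)^{e+1}·∏_{i=1}^e H_i = q·exp (Σ_{m≥1} (1/m)·[z^{me}]{Q(z)^m}·q^m)`. -/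
theorem stmt4 {K : Type*} [Field K] [CharZero K] (e : ℕ) (he : 1 ≤ e) (ω : K)
    (hω : IsPrimitiveRoot ω e) (Q h : PowerSeries K)
    (hQ1 : PowerSeries.constantCoeff Q = 1)
    (hh0 : PowerSeries.constantCoeff h = 0)
    (hh : h ^ e = PowerSeries.X ^ e * pcomp Q h)
    (G : PowerSeries K)
    (hG : (∏ i ∈ Finset.Icc 1 e, PowerSeries.rescale (ω ^ i) h) = PowerSeries.X ^ e * G) :
    PowerSeries.constantCoeff G = (-1 : K) ^ (e + 1) ∧
    logS ((-1 : PowerSeries K) ^ (e + 1) * G)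
      = pcomp (PowerSeries.mk fun m => (m : K)⁻¹ * PowerSeries.coeff (m * e) (Q ^ m))
          (PowerSeries.X ^ e) ∧
    ((-1 : PowerSeries K) ^ (e + 1) * ∏ i ∈ Finset.Icc 1 e, PowerSeries.rescale (ω ^ i) h)
      = PowerSeries.X ^ e *
          expS (pcomp (PowerSeries.mk fun m => (m : K)⁻¹ * PowerSeries.coeff (m * e) (Q ^ m))
            (PowerSeries.X ^ e)) := by
  have he0 : e ≠ 0 := by omega
  have hXe : (X : K⟦X⟧) ^ e ≠ 0 := pow_ne_zero e X_ne_zero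
  obtain ⟨v, rfl⟩ := X_dvd_iff.mpr hh0
  have hvQ : v ^ e = pcomp Q (X * v) := mul_left_cancel₀ hXe (by rw [← mul_pow, hh])
  have hv1 : constantCoeff v ^ e = 1 := by
    simpa [constantCoeff_pcomp, hQ1] using congrArg constantCoeff hvQ
  have hv0 : constantCoeff v ≠ 0 := fun h0 ↦ by simp [h0, he0] at hv1
  rw [pcomp_eq_subst hh0] at hvQ
  set V := ∏ i ∈ Icc 1 e, rescale (ω ^ i) v
  have hGV : G = (-1) ^ (e + 1) * V := by
    refine mul_left_cancel₀ hXe ?_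
    rw [← hG, prod_rescale_X_mul, hω.prod_Icc_pow he0, Nat.card_Icc, Nat.add_sub_cancel]
    simp [V]
  have hV : (-1) ^ (e + 1) * G = V := by
    rw [hGV, ← mul_assoc, ← mul_pow, neg_one_mul, neg_neg, one_pow, one_mul]
  have hV1 : constantCoeff V = 1 := by
    simp [V, map_prod, constantCoeff_rescale, hv1]
  have hL0 : constantCoeff (pcomp (mk fun m ↦ (m : K)⁻¹ * coeff (m * e) (Q ^ m)) (X ^ e)) = 0 := by
    simp [constantCoeff_pcomp]
  have hdV := derivative_prod_rescale hω he0 hv0 hvQ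
  rw [← pcomp_eq_subst (by simp [he0])] at hdV
  refine ⟨by simp [hGV, hV1], ?_, ?_⟩
  · rw [hV, logS_eq_logOf hV1]
    exact logOf_eq_of_derivative_eq_mul hL0 hV1 hdV
  · rw [hG, mul_left_comm, hV, expS_eq_exp_subst hL0,
      ← eq_exp_subst_of_derivative_eq_mul hL0 hV1 hdV]
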